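/- arXiv:2509.10497 — 2 statements merged into one kernel-verified Lean document; each statement's English description precedes it below -/
import Mathlib

section
/- Let (Ω, d) be a metric space, R a binary relation on Ω, and S : Ω → Ω a map such that: (i) every R-preserving Cauchy sequence in Ω converges (Ω is d-R-complete); (ii) R is S-closed, i.e., (x,y) ∈ R implies (Sx, Sy) ∈ R; (iii) there exists r₀ ∈ Ω with (r₀, S r₀) ∈ R; (iv) either S is d-R-continuous (for every R-preserving sequence {rₙ} converging to r, {S rₙ} converges to S r) or R is d-self-closed (for every R-preserving convergent sequence {rₙ} with limit r there is a subsequence {r_{n_l}} with (r_{n_l}, r) ∈ R for all l); (v) there exists α ∈ (0,1) with d(Sx, Sy) ≤ α d(x,y) for all (x,y) ∈ R. Then S has a fixed point, and for each r₀ ∈ Ω with (r₀, S r₀) ∈ R the Picard sequence {Sⁿ r₀} converges to a fixed point of S. -/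
/-!
Along the Picard orbit of a point `r₀` with `R r₀ (S r₀)`, `S`-closedness keeps consecutive
iterates `R`-related, so the contraction applies to every step and the orbit moves by at most
`d(r₀, S r₀) αⁿ` at step `n`. The orbit is therefore an `R`-preserving Cauchy sequence and
converges to some `x`. Either `S` is continuous along `R`-preserving sequences, or a
subsequence of the orbit is `R`-related to `x` and the contraction makes `S` continuous along
it; in both cases `S x` is a limit of (a subsequence of) the shifted orbit, hence `S x = x`.
-/

open Filter Topology Function

theorem tendsto_comp_of_dist_le_mul {ι X Y : Type*} [PseudoMetricSpace X] [PseudoMetricSpace Y]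
    {l : Filter ι} {f : X → Y} {u : ι → X} {y : X} {α : ℝ} (hu : Tendsto u l (𝓝 y))
    (hle : ∀ i, dist (f (u i)) (f y) ≤ α * dist (u i) y) :
    Tendsto (f ∘ u) l (𝓝 (f y)) := by
  have hdist : Tendsto (fun i => α * dist (u i) y) l (𝓝 0) := by
    simpa using (tendsto_iff_dist_tendsto_zero.mp hu).const_mul α
  exact tendsto_iff_dist_tendsto_zero.mpr (squeeze_zero (fun _ => dist_nonneg) hle hdist)

section RelationalContraction

variable {Ω : Type*} {R : Ω → Ω → Prop} {S : Ω → Ω}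

theorem rel_iterate_succ (hSclosed : ∀ x y : Ω, R x y → R (S x) (S y)) {x : Ω}
    (hx : R x (S x)) (n : ℕ) : R (S^[n] x) (S^[n + 1] x) := by
  induction n with
  | zero => simpa using hx
  | succ k ih =>
    simpa only [iterate_succ_apply'] using hSclosed _ _ ih

theorem isFixedPt_of_tendsto_iterate_of_tendsto_subseq [TopologicalSpace Ω] [T2Space Ω]
    {x y : Ω} {φ : ℕ → ℕ} (hφ : StrictMono φ) (hx : Tendsto (fun n => S^[n] x) atTop (𝓝 y))
    (hS : Tendsto (fun l => S (S^[φ l] x)) atTop (𝓝 (S y))) : IsFixedPt S y := by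
  have hshift : Tendsto (fun l => S (S^[φ l] x)) atTop (𝓝 y) := by
    simpa only [comp_def, iterate_succ_apply'] using
      hx.comp ((tendsto_add_atTop_nat 1).comp hφ.tendsto_atTop)
  exact tendsto_nhds_unique hS hshift

variable [PseudoMetricSpace Ω]

theorem dist_iterate_succ_le_geometric {α : ℝ} (hα : 0 ≤ α)
    (hSclosed : ∀ x y : Ω, R x y → R (S x) (S y))
    (hcontr : ∀ x y : Ω, R x y → dist (S x) (S y) ≤ α * dist x y) {x : Ω}
    (hx : R x (S x)) (n : ℕ) : dist (S^[n] x) (S^[n + 1] x) ≤ dist x (S x) * α ^ n := by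
  induction n with
  | zero => simp
  | succ k ih =>
    calc dist (S^[k + 1] x) (S^[k + 1 + 1] x)
        = dist (S (S^[k] x)) (S (S^[k + 1] x)) := by
          simp only [iterate_succ_apply']
      _ ≤ α * dist (S^[k] x) (S^[k + 1] x) := hcontr _ _ (rel_iterate_succ hSclosed hx k)
      _ ≤ α * (dist x (S x) * α ^ k) := mul_le_mul_of_nonneg_left ih hα
      _ = dist x (S x) * α ^ (k + 1) := by ring

theorem exists_strictMono_tendsto_map_iterate {α : ℝ}
    (hiv : (∀ (r : ℕ → Ω) (x : Ω), (∀ n, R (r n) (r (n + 1))) →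
        Tendsto r atTop (𝓝 x) → Tendsto (fun n => S (r n)) atTop (𝓝 (S x))) ∨
      (∀ (r : ℕ → Ω) (x : Ω), (∀ n, R (r n) (r (n + 1))) →
        Tendsto r atTop (𝓝 x) → ∃ φ : ℕ → ℕ, StrictMono φ ∧ ∀ l : ℕ, R (r (φ l)) x))
    (hcontr : ∀ x y : Ω, R x y → dist (S x) (S y) ≤ α * dist x y) {x y : Ω}
    (horbit : ∀ n, R (S^[n] x) (S^[n + 1] x)) (hx : Tendsto (fun n => S^[n] x) atTop (𝓝 y)) :
    ∃ φ : ℕ → ℕ, StrictMono φ ∧ Tendsto (fun l => S (S^[φ l] x)) atTop (𝓝 (S y)) := by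
  rcases hiv with hcont | hselfClosed
  · exact ⟨id, strictMono_id, hcont _ y horbit hx⟩
  · obtain ⟨φ, hφ, hRφ⟩ := hselfClosed _ y horbit hx
    exact ⟨φ, hφ, tendsto_comp_of_dist_le_mul (hx.comp hφ.tendsto_atTop)
      fun l => hcontr _ _ (hRφ l)⟩

end RelationalContraction

/-- Relation-theoretic Banach contraction principle in a metric space
(Alam–Imdad): existence of a fixed point and convergence of Picard sequences
started at points `r₀` with `(r₀, S r₀) ∈ R`. -/
theorem metric_relational_BCP {Ω : Type*} [MetricSpace Ω]
    (R : Ω → Ω → Prop) (S : Ω → Ω)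
    -- (i) Ω is d-R-complete
    (hcomplete : ∀ r : ℕ → Ω, (∀ n, R (r n) (r (n + 1))) → CauchySeq r →
      ∃ x : Ω, Tendsto r atTop (nhds x))
    -- (ii) R is S-closed
    (hSclosed : ∀ x y : Ω, R x y → R (S x) (S y))
    -- (iii) Ω(S; R) is nonempty
    (hnonempty : ∃ r₀ : Ω, R r₀ (S r₀))
    -- (iv) S is d-R-continuous or R is d-self-closed
    (hiv : (∀ (r : ℕ → Ω) (x : Ω), (∀ n, R (r n) (r (n + 1))) →
        Tendsto r atTop (nhds x) →
        Tendsto (fun n => S (r n)) atTop (nhds (S x))) ∨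
      (∀ (r : ℕ → Ω) (x : Ω), (∀ n, R (r n) (r (n + 1))) →
        Tendsto r atTop (nhds x) →
        ∃ φ : ℕ → ℕ, StrictMono φ ∧ ∀ l : ℕ, R (r (φ l)) x))
    -- (v) S is an R-preserving contraction
    (α : ℝ) (hα : α ∈ Set.Ioo (0 : ℝ) 1)
    (hcontr : ∀ x y : Ω, R x y → dist (S x) (S y) ≤ α * dist x y) :
    (∃ x : Ω, S x = x) ∧
      ∀ r₀ : Ω, R r₀ (S r₀) → ∃ x : Ω, S x = x ∧
        Tendsto (fun n => S^[n] r₀) atTop (nhds x) := by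
  have picard : ∀ r₀ : Ω, R r₀ (S r₀) → ∃ x : Ω, S x = x ∧
      Tendsto (fun n => S^[n] r₀) atTop (nhds x) := by
    intro r₀ h₀
    have horbit := rel_iterate_succ hSclosed h₀
    have hcauchy : CauchySeq fun n => S^[n] r₀ := cauchySeq_of_le_geometric α _ hα.2
      (dist_iterate_succ_le_geometric hα.1.le hSclosed hcontr h₀)
    obtain ⟨x, hx⟩ := hcomplete _ horbit hcauchy
    obtain ⟨φ, hφ, hSφ⟩ := exists_strictMono_tendsto_map_iterate hiv hcontr horbit hx
    exact ⟨x, isFixedPt_of_tendsto_iterate_of_tendsto_subseq hφ hx hSφ, hx⟩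
  obtain ⟨r₀, h₀⟩ := hnonempty
  exact ⟨(picard r₀ h₀).imp fun _ => And.left, picard⟩
end

section
/- Let ζ ∈ (1, 2], α ∈ (0,1), and let h : [0,1] × ℝ → ℝ be a continuous function such that for all t ∈ [0,1] and all x, y ∈ ℝ with x ≤ y, |h(t,x) − h(t,y)| ≤ (α Γ(ζ+1)/4) |x − y|. Define the operator T on C([0,1], ℝ) by (T u)(t) = (1/Γ(ζ)) ∫₀ᵗ (t − s)^{ζ−1} h(s, u(s)) ds + (2t/Γ(ζ)) ∫₀¹ ( ∫₀ˢ (s − m)^{ζ−1} h(m, u(m)) dm ) ds. Then for all u, v ∈ C([0,1], ℝ) with u(t) ≤ v(t) for all t ∈ [0,1], sup_{t ∈ [0,1]} |(T u)(t) − (T v)(t)| ≤ α · sup_{t ∈ [0,1]} |u(t) − v(t)|. -/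
/-!
With `d(s) = h(s, u(s)) - h(s, v(s))`, the difference `T u - T v` is a combination of
`∫₀ᵗ (t - s)^(ζ-1) d(s) ds` and of its integral over `[0, 1]`. Since `u ≤ v`, the one-sided
Lipschitz bound gives `|d| ≤ αΓ(ζ+1)/4 · sup |u - v|`, and integrating the kernel exactly
bounds the Lipschitz constant of `T` by `α (1/4 + 1/(2Γ(ζ)(ζ+1)))`. This is at most `α` because
`Γ(ζ)(ζ+1) ≥ Γ(ζ)ζ = Γ(ζ+1) ≥ Γ(2) = 1` for `ζ ≥ 1`.
-/

open Real Set

/-- The integral operator associated with the Caputo fractional boundary value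
problem `D^ζ f(t) = h(t, f(t))`, `f(0) = 0`, `I f(1) = f'(0)`. -/
noncomputable def fracOp (ζ : ℝ) (h : ℝ → ℝ → ℝ) (u : ℝ → ℝ) : ℝ → ℝ :=
  fun t =>
    (1 / Real.Gamma ζ) * ∫ s in (0 : ℝ)..t, (t - s) ^ (ζ - 1) * h s (u s) +
      (2 * t / Real.Gamma ζ) *
        ∫ s in (0 : ℝ)..1, ∫ m in (0 : ℝ)..s, (s - m) ^ (ζ - 1) * h m (u m)

open MeasureTheory

/-- `Γ(ζ)` times the Riemann–Liouville integral of order `ζ` of `g`. -/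
noncomputable def fracIntegral (ζ : ℝ) (g : ℝ → ℝ) (t : ℝ) : ℝ :=
  ∫ s in (0 : ℝ)..t, (t - s) ^ (ζ - 1) * g s

section FracIntegral

variable {ζ : ℝ} {g : ℝ → ℝ}

theorem continuous_fracIntegral (hζ : 1 ≤ ζ) (hg : Continuous g) :
    Continuous (fracIntegral ζ g) := by
  have hf : Continuous (Function.uncurry fun t s : ℝ => (t - s) ^ (ζ - 1) * g s) :=
    ((continuous_rpow_const (by linarith)).comp (continuous_fst.sub continuous_snd)).mul
      (hg.comp continuous_snd)
  exact (intervalIntegral.continuous_parametric_primitive_of_continuous (μ := volume) (a₀ := 0)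
    hf).comp (continuous_id.prodMk continuous_id)

theorem continuousOn_fracIntegral (hζ : 1 ≤ ζ) {b : ℝ} (hg : ContinuousOn g (Icc 0 b)) :
    ContinuousOn (fracIntegral ζ g) (Icc 0 b) := by
  rcases lt_or_ge b 0 with hb | hb
  · simp [Icc_eq_empty_of_lt hb]
  refine (continuous_fracIntegral hζ (hg.domRestrict.Icc_extend' (h := hb))).continuousOn.congr
    fun t ht => intervalIntegral.integral_congr fun s hs => ?_
  rw [uIcc_of_le ht.1] at hs
  simp [IccExtend_of_mem _ _ ⟨hs.1, hs.2.trans ht.2⟩]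

theorem intervalIntegrable_fracIntegrand (hζ : 1 ≤ ζ) {b t : ℝ}
    (hg : ContinuousOn g (Icc 0 b))
    (ht : t ∈ Icc 0 b) : IntervalIntegrable (fun s => (t - s) ^ (ζ - 1) * g s) volume 0 t :=
  ContinuousOn.intervalIntegrable_of_Icc ht.1 <|
    ((continuous_rpow_const (by linarith)).comp
      (continuous_const.sub continuous_id)).continuousOn.mul (hg.mono (Icc_subset_Icc_right ht.2))

theorem fracIntegral_sub {f : ℝ → ℝ} {t : ℝ}
    (hf : IntervalIntegrable (fun s => (t - s) ^ (ζ - 1) * f s) volume 0 t)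
    (hg : IntervalIntegrable (fun s => (t - s) ^ (ζ - 1) * g s) volume 0 t) :
    fracIntegral ζ f t - fracIntegral ζ g t = fracIntegral ζ (fun s => f s - g s) t := by
  simp only [fracIntegral, ← intervalIntegral.integral_sub hf hg, mul_sub]

theorem integral_sub_rpow (hζ : 0 < ζ) (t : ℝ) :
    ∫ s in (0 : ℝ)..t, (t - s) ^ (ζ - 1) = t ^ ζ / ζ := by
  rw [intervalIntegral.integral_comp_sub_left (fun x => x ^ (ζ - 1)) t, sub_self, sub_zero,
    integral_rpow (Or.inl (by linarith)), sub_add_cancel, zero_rpow hζ.ne', sub_zero]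

theorem abs_fracIntegral_le (hζ : 1 ≤ ζ) {t K : ℝ} (ht : 0 ≤ t)
    (hg : ∀ s ∈ Ioc 0 t, |g s| ≤ K) : |fracIntegral ζ g t| ≤ K * (t ^ ζ / ζ) := by
  rw [← integral_sub_rpow (by linarith), ← intervalIntegral.integral_const_mul, ← norm_eq_abs]
  refine intervalIntegral.norm_integral_le_of_norm_le ht (ae_of_all _ fun s hs => ?_)
    (Continuous.intervalIntegrable (by fun_prop (disch := linarith)) _ _)
  have hts : 0 ≤ (t - s) ^ (ζ - 1) := rpow_nonneg (sub_nonneg.2 hs.2) _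
  rw [norm_mul, norm_of_nonneg hts, mul_comm]
  exact mul_le_mul_of_nonneg_right (hg s hs) hts

theorem abs_integral_fracIntegral_le (hζ : 1 ≤ ζ) {b K : ℝ} (hb : 0 ≤ b)
    (hg : ∀ s ∈ Ioc 0 b, |g s| ≤ K) :
    |∫ s in (0 : ℝ)..b, fracIntegral ζ g s| ≤ K * (b ^ (ζ + 1) / (ζ * (ζ + 1))) := by
  have hζ0 : 0 < ζ := by linarith
  have hbound :
      ∫ s in (0 : ℝ)..b, K * (s ^ ζ / ζ) = K * (b ^ (ζ + 1) / (ζ * (ζ + 1))) := by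
    rw [intervalIntegral.integral_const_mul, intervalIntegral.integral_div,
      integral_rpow (Or.inl (by linarith)),
      zero_rpow (by linarith), sub_zero]
    field_simp
  rw [← hbound, ← norm_eq_abs]
  exact intervalIntegral.norm_integral_le_of_norm_le hb
    (ae_of_all _ fun s hs =>
      abs_fracIntegral_le hζ hs.1.le fun r hr => hg r ⟨hr.1, hr.2.trans hs.2⟩)
    (Continuous.intervalIntegrable (by fun_prop (disch := linarith)) _ _)

end FracIntegral

theorem one_le_Gamma_mul_add_one {ζ : ℝ} (hζ : 1 ≤ ζ) : 1 ≤ Gamma ζ * (ζ + 1) := by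
  have hmono : Gamma 2 ≤ Gamma (ζ + 1) :=
    Gamma_strictMonoOn_Ici.monotoneOn (mem_Ici.2 le_rfl) (mem_Ici.2 (by linarith)) (by linarith)
  rw [Gamma_two, Gamma_add_one (by linarith)] at hmono
  nlinarith [Gamma_pos_of_pos (by linarith : 0 < ζ)]

theorem ContinuousOn.le_iSup_Icc {f : ℝ → ℝ} {a b t : ℝ} (hf : ContinuousOn f (Icc a b))
    (ht : t ∈ Icc a b) : f t ≤ ⨆ s : Icc a b, f s :=
  le_ciSup (image_eq_range _ _ ▸ isCompact_Icc.bddAbove_image hf) ⟨t, ht⟩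

section FracOp

variable {ζ t : ℝ} {h : ℝ → ℝ → ℝ} {u v : ℝ → ℝ}

/- `∫ s in 0..t, f s + c` parses as `∫ s in 0..t, (f s + c)`, so in `fracOp` the double integral
term lies inside the first integral; this is where `t ^ 2` and `Γ(ζ) ^ 2` come from. -/
theorem fracOp_sub_fracOp (hζ : 1 ≤ ζ) (hu : ContinuousOn (fun s => h s (u s)) (Icc 0 1))
    (hv : ContinuousOn (fun s => h s (v s)) (Icc 0 1)) (ht : t ∈ Icc 0 1) :
    fracOp ζ h u t - fracOp ζ h v t =
      (fracIntegral ζ (fun s => h s (u s) - h s (v s)) t +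
        2 * t ^ 2 / Gamma ζ *
          ∫ s in (0 : ℝ)..1, fracIntegral ζ (fun s => h s (u s) - h s (v s)) s) /
        Gamma ζ := by
  have hsplit : ∀ w : ℝ → ℝ, ContinuousOn (fun s => h s (w s)) (Icc 0 1) →
      fracOp ζ h w t = 1 / Gamma ζ * (fracIntegral ζ (fun s => h s (w s)) t +
        t * (2 * t / Gamma ζ * ∫ s in (0 : ℝ)..1, fracIntegral ζ (fun s => h s (w s)) s)) :=
      fun w hw => by
    rw [fracOp, intervalIntegral.integral_add (intervalIntegrable_fracIntegrand hζ hw ht)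
      intervalIntegrable_const, intervalIntegral.integral_const, sub_zero, smul_eq_mul]
    rfl
  have hint : ∀ w : ℝ → ℝ, ContinuousOn (fun s => h s (w s)) (Icc 0 1) →
      IntervalIntegrable (fracIntegral ζ (fun s => h s (w s))) volume 0 1 := fun w hw =>
    (continuousOn_fracIntegral hζ hw).intervalIntegrable_of_Icc zero_le_one
  have hdouble : ∫ s in (0 : ℝ)..1, fracIntegral ζ (fun s => h s (u s) - h s (v s)) s =
      (∫ s in (0 : ℝ)..1, fracIntegral ζ (fun s => h s (u s)) s) -
        ∫ s in (0 : ℝ)..1, fracIntegral ζ (fun s => h s (v s)) s := by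
    rw [← intervalIntegral.integral_sub (hint u hu) (hint v hv)]
    refine intervalIntegral.integral_congr fun s hs => ?_
    rw [uIcc_of_le zero_le_one] at hs
    exact (fracIntegral_sub (intervalIntegrable_fracIntegrand hζ hu hs)
      (intervalIntegrable_fracIntegrand hζ hv hs)).symm
  rw [hsplit u hu, hsplit v hv, hdouble, ← fracIntegral_sub
    (intervalIntegrable_fracIntegrand hζ hu ht) (intervalIntegrable_fracIntegrand hζ hv ht)]
  ring

theorem abs_fracOp_sub_fracOp_le (hζ : 1 ≤ ζ) {K : ℝ}
    (hu : ContinuousOn (fun s => h s (u s)) (Icc 0 1))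
    (hv : ContinuousOn (fun s => h s (v s)) (Icc 0 1))
    (hK : ∀ s ∈ Icc (0 : ℝ) 1, |h s (u s) - h s (v s)| ≤ K) (ht : t ∈ Icc 0 1) :
    |fracOp ζ h u t - fracOp ζ h v t| ≤
      K * (1 / ζ + 2 / (Gamma ζ * (ζ * (ζ + 1)))) / Gamma ζ := by
  have hΓ : 0 < Gamma ζ := Gamma_pos_of_pos (by linarith)
  have hK0 : 0 ≤ K := (abs_nonneg _).trans (hK 0 (left_mem_Icc.2 zero_le_one))
  set d := fun s => h s (u s) - h s (v s)
  have hI : |fracIntegral ζ d t| ≤ K * (1 / ζ) := by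
    refine (abs_fracIntegral_le hζ ht.1 fun s hs => hK s ⟨hs.1.le, hs.2.trans ht.2⟩).trans ?_
    gcongr
    exact rpow_le_one ht.1 ht.2 (by linarith)
  have hJ : |∫ s in (0 : ℝ)..1, fracIntegral ζ d s| ≤ K * (1 / (ζ * (ζ + 1))) := by
    simpa using
      abs_integral_fracIntegral_le hζ zero_le_one fun s hs => hK s (Ioc_subset_Icc_self hs)
  have hc : 0 ≤ 2 * t ^ 2 / Gamma ζ := by positivity
  rw [fracOp_sub_fracOp hζ hu hv ht, abs_div, abs_of_pos hΓ]
  gcongr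
  calc |fracIntegral ζ d t + 2 * t ^ 2 / Gamma ζ * ∫ s in (0 : ℝ)..1, fracIntegral ζ d s|
        ≤ |fracIntegral ζ d t| +
            2 * t ^ 2 / Gamma ζ * |∫ s in (0 : ℝ)..1, fracIntegral ζ d s| :=
          (abs_add_le _ _).trans_eq (by rw [abs_mul, abs_of_nonneg hc])
    _ ≤ K * (1 / ζ) + 2 * 1 / Gamma ζ * (K * (1 / (ζ * (ζ + 1)))) := by
          gcongr
          nlinarith [ht.1, ht.2]
    _ = K * (1 / ζ + 2 / (Gamma ζ * (ζ * (ζ + 1)))) := by field_simp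

end FracOp

/-- Contraction estimate for the fractional integral operator on comparable
functions: if `|h(t,x) − h(t,y)| ≤ (α Γ(ζ+1)/4)|x − y|` for `x ≤ y`, then for
pointwise comparable `u ≤ v` on `[0,1]`,
`sup_{t ∈ [0,1]} |(T u)(t) − (T v)(t)| ≤ α · sup_{t ∈ [0,1]} |u(t) − v(t)|`. -/
theorem fracOp_contraction (ζ : ℝ) (hζ : ζ ∈ Set.Ioc (1 : ℝ) 2)
    (α : ℝ) (hα : α ∈ Set.Ioo (0 : ℝ) 1)
    (h : ℝ → ℝ → ℝ)
    (h_cont : ContinuousOn (Function.uncurry h) (Set.Icc (0 : ℝ) 1 ×ˢ Set.univ))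
    (h_lip : ∀ t ∈ Set.Icc (0 : ℝ) 1, ∀ x y : ℝ, x ≤ y →
      |h t x - h t y| ≤ α * Real.Gamma (ζ + 1) / 4 * |x - y|)
    (u v : ℝ → ℝ)
    (hu : ContinuousOn u (Set.Icc (0 : ℝ) 1))
    (hv : ContinuousOn v (Set.Icc (0 : ℝ) 1))
    (huv : ∀ t ∈ Set.Icc (0 : ℝ) 1, u t ≤ v t) :
    (⨆ t : Set.Icc (0 : ℝ) 1, |fracOp ζ h u t - fracOp ζ h v t|) ≤
      α * ⨆ t : Set.Icc (0 : ℝ) 1, |u t - v t| := by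
  have hζ1 : 1 ≤ ζ := hζ.1.le
  have hΓ : 0 < Gamma ζ := Gamma_pos_of_pos (by linarith)
  set M := ⨆ t : Icc (0 : ℝ) 1, |u t - v t|
  have hM : ∀ t ∈ Icc (0 : ℝ) 1, |u t - v t| ≤ M := fun _ ht =>
    (hu.sub hv).abs.le_iSup_Icc ht
  have hcomp : ∀ w : ℝ → ℝ, ContinuousOn w (Icc 0 1) →
      ContinuousOn (fun s => h s (w s)) (Icc 0 1) := fun w hw =>
    h_cont.comp (continuousOn_id.prodMk hw) fun s hs => ⟨hs, trivial⟩
  have hC : 0 ≤ α * Gamma (ζ + 1) / 4 :=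
    div_nonneg (mul_nonneg hα.1.le (Gamma_pos_of_pos (by linarith)).le) zero_le_four
  have hK : ∀ s ∈ Icc (0 : ℝ) 1, |h s (u s) - h s (v s)| ≤ α * Gamma (ζ + 1) / 4 * M :=
    fun s hs => (h_lip s hs _ _ (huv s hs)).trans (mul_le_mul_of_nonneg_left (hM s hs) hC)
  have : Nonempty (Icc (0 : ℝ) 1) := ⟨⟨0, left_mem_Icc.2 zero_le_one⟩⟩
  refine ciSup_le fun t => (abs_fracOp_sub_fracOp_le hζ1 (hcomp u hu) (hcomp v hv) hK t.2).trans ?_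
  have hαM : 0 ≤ α * M :=
    mul_nonneg hα.1.le ((abs_nonneg _).trans (hM 0 (left_mem_Icc.2 zero_le_one)))
  have hmul := one_le_Gamma_mul_add_one hζ1
  calc α * Gamma (ζ + 1) / 4 * M * (1 / ζ + 2 / (Gamma ζ * (ζ * (ζ + 1)))) / Gamma ζ
      = α * M * (1 / 4 + 1 / (2 * (Gamma ζ * (ζ + 1)))) := by
        rw [Gamma_add_one (by linarith)]
        field_simp
        ring
    _ ≤ α * M * (1 / 4 + 1 / (2 * 1)) := by gcongr
    _ ≤ α * M := by linarith
end
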